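/- Suppose g, ĝ ≥ 0 satisfy |ĝ - g| ≤ C·r(g) where r(u) = L^{β/(β+1)} ∨ (uL)^{β/(2β+1)}, L ∈ (0,1), β > 0, C ≥ 1. Then there is a constant C̄ = C̄(β, C) (independent of g, ĝ, L) such that C̄^{-1} r(ĝ) ≤ r(g) ≤ C̄ r(ĝ). -/

import Mathlib

/-!
Put `a = L^p` with `p = β/(β+1)` and `q = β/(2β+1)`. Since `(p + 1) q = p`, we have
`(a L)^q = a`, so the rate is a rescaled copy of a single profile:
`r(u) = a · φ(u/a)` with `φ x = max 1 (x^q)`. In these units the hypothesis reads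
`|y - x| ≤ C φ(x)`, and the comparison of `φ(x)` with `φ(y)` follows from monotonicity,
subadditivity and `φ(c x) ≤ c φ(x)` for `c ≥ 1`, together with the fact that
`x ≤ C φ(x) + x/2` forces `φ(x) ≤ 2C` because `q ≤ 1/2`.
-/

open Real

noncomputable def rateP (β L u : ℝ) : ℝ :=
  max (L ^ (β / (β + 1))) ((u * L) ^ (β / (2 * β + 1)))

noncomputable def maxOneRpow (q x : ℝ) : ℝ :=
  max 1 (x ^ q)

namespace maxOneRpow

variable {q x y : ℝ}

lemma one_le : 1 ≤ maxOneRpow q x :=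
  le_max_left _ _

lemma rpow_le : x ^ q ≤ maxOneRpow q x :=
  le_max_right _ _

lemma mono (hq : 0 ≤ q) (hx : 0 ≤ x) (hxy : x ≤ y) : maxOneRpow q x ≤ maxOneRpow q y :=
  max_le_max le_rfl (rpow_le_rpow hx hxy hq)

lemma add_le (hq0 : 0 ≤ q) (hq1 : q ≤ 1) (hx : 0 ≤ x) (hy : 0 ≤ y) :
    maxOneRpow q (x + y) ≤ maxOneRpow q x + maxOneRpow q y := by
  refine max_le (by linarith [one_le (q := q) (x := x), one_le (q := q) (x := y)]) ?_
  calc (x + y) ^ q ≤ x ^ q + y ^ q := rpow_add_le_add_rpow hx hy hq0 hq1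
    _ ≤ maxOneRpow q x + maxOneRpow q y := add_le_add rpow_le rpow_le

lemma mul_le {c : ℝ} (hq1 : q ≤ 1) (hc : 1 ≤ c) (hx : 0 ≤ x) :
    maxOneRpow q (c * x) ≤ c * maxOneRpow q x := by
  have hcq : c ^ q ≤ c := rpow_le_self_of_one_le hc hq1
  refine max_le (hc.trans (le_mul_of_one_le_right (by linarith) one_le)) ?_
  calc (c * x) ^ q = c ^ q * x ^ q := mul_rpow (by linarith) hx
    _ ≤ c * maxOneRpow q x :=
      mul_le_mul hcq rpow_le (rpow_nonneg hx q) (by linarith)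

lemma self_le (hq1 : q ≤ 1) : maxOneRpow q (maxOneRpow q x) ≤ maxOneRpow q x :=
  max_le one_le (rpow_le_self_of_one_le one_le hq1)

lemma le_one_add_mul_of_le_add {C : ℝ} (hq0 : 0 ≤ q) (hq1 : q ≤ 1) (hC : 1 ≤ C) (hx : 0 ≤ x)
    (hy : 0 ≤ y) (h : y ≤ x + C * maxOneRpow q x) :
    maxOneRpow q y ≤ (1 + C) * maxOneRpow q x := by
  have hφ : 0 ≤ maxOneRpow q x := zero_le_one.trans one_le
  calc maxOneRpow q y ≤ maxOneRpow q (x + C * maxOneRpow q x) := mono hq0 hy h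
    _ ≤ maxOneRpow q x + maxOneRpow q (C * maxOneRpow q x) :=
      add_le hq0 hq1 hx (by positivity)
    _ ≤ maxOneRpow q x + C * maxOneRpow q (maxOneRpow q x) :=
      add_le_add le_rfl (mul_le hq1 hC hφ)
    _ ≤ maxOneRpow q x + C * maxOneRpow q x :=
      add_le_add le_rfl (mul_le_mul_of_nonneg_left (self_le hq1) (by linarith))
    _ = (1 + C) * maxOneRpow q x := by ring

lemma le_two_mul_of_le_add {C : ℝ} (hq0 : 0 ≤ q) (hq : q ≤ 1 / 2) (hC : 1 ≤ C) (hx : 0 ≤ x)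
    (hy : 0 ≤ y) (h : x ≤ y + C * maxOneRpow q x) :
    maxOneRpow q x ≤ 2 * C * maxOneRpow q y := by
  have hCφ : 2 * C ≤ 2 * C * maxOneRpow q y := le_mul_of_one_le_right (by linarith) one_le
  refine max_le (by linarith) ?_
  rcases le_total x 1 with hx1 | hx1
  · linarith [rpow_le_one hx hx1 hq0]
  rcases le_total x (2 * y) with hxy | hxy
  · calc x ^ q ≤ maxOneRpow q (2 * y) := rpow_le.trans (mono hq0 hx hxy)
      _ ≤ 2 * maxOneRpow q y := mul_le (by linarith) one_le_two hy
      _ ≤ 2 * C * maxOneRpow q y :=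
        mul_le_mul_of_nonneg_right (by linarith) (zero_le_one.trans one_le)
  · have hφx : maxOneRpow q x = x ^ q := max_eq_right (one_le_rpow hx1 hq0)
    -- `2q ≤ 1` gives `(x^q)^2 ≤ x < 2C x^q`.
    have hsq : x ^ q * x ^ q ≤ x := by
      rw [← rpow_add (by linarith)]
      simpa using rpow_le_rpow_of_exponent_le hx1 (by linarith : q + q ≤ 1)
    have hx2C : x ≤ 2 * C * x ^ q := by
      rw [hφx] at h
      linarith
    have hxq : x ^ q ≤ 2 * C :=
      le_of_mul_le_mul_right (hsq.trans hx2C) (rpow_pos_of_pos (by linarith) q)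
    linarith

end maxOneRpow

lemma max_rpow_eq_mul_maxOneRpow {a L q u : ℝ} (ha : 0 < a) (hL : 0 ≤ L) (hu : 0 ≤ u)
    (haL : (a * L) ^ q = a) : max a ((u * L) ^ q) = a * maxOneRpow q (u / a) := by
  have hu' : u * L = u / a * (a * L) := by field_simp
  rw [maxOneRpow, mul_max_of_nonneg _ _ ha.le, mul_one, hu',
    mul_rpow (div_nonneg hu ha.le) (by positivity), haL, mul_comm]

lemma rateP_eq_mul_maxOneRpow {β L u : ℝ} (hβ : 0 ≤ β) (hL : 0 < L) (hu : 0 ≤ u) :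
    rateP β L u =
      L ^ (β / (β + 1)) * maxOneRpow (β / (2 * β + 1)) (u / L ^ (β / (β + 1))) := by
  have hexp : (β / (β + 1) + 1) * (β / (2 * β + 1)) = β / (β + 1) := by
    field_simp
    ring
  refine max_rpow_eq_mul_maxOneRpow (rpow_pos_of_pos hL _) hL.le hu ?_
  rw [← rpow_add_one hL.ne', ← rpow_mul hL.le, hexp]

theorem stmt_19 (β C : ℝ) (hβ : 0 < β) (hC : 1 ≤ C) :
    ∃ Cbar : ℝ, 0 < Cbar ∧ ∀ L g ghat : ℝ, 0 < L → L < 1 → 0 ≤ g → 0 ≤ ghat →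
      |ghat - g| ≤ C * rateP β L g →
      Cbar⁻¹ * rateP β L ghat ≤ rateP β L g ∧ rateP β L g ≤ Cbar * rateP β L ghat := by
  refine ⟨2 * C, by positivity, fun L g ghat hL _ hg hghat hbound => ?_⟩
  simp only [rateP_eq_mul_maxOneRpow hβ.le hL hg, rateP_eq_mul_maxOneRpow hβ.le hL hghat]
    at hbound ⊢
  set a := L ^ (β / (β + 1))
  set q := β / (2 * β + 1)
  have ha : 0 < a := rpow_pos_of_pos hL _
  have hq0 : 0 ≤ q := by positivity
  have hq : q ≤ 1 / 2 := by
    rw [div_le_iff₀ (by positivity)]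
    linarith
  have hscaled : |ghat / a - g / a| ≤ C * maxOneRpow q (g / a) := by
    rw [← sub_div, abs_div, abs_of_pos ha, div_le_iff₀ ha]
    linarith
  obtain ⟨hghat_ge, hghat_le⟩ := abs_le.mp hscaled
  have hx : 0 ≤ g / a := div_nonneg hg ha.le
  have hy : 0 ≤ ghat / a := div_nonneg hghat ha.le
  have hup : maxOneRpow q (ghat / a) ≤ 2 * C * maxOneRpow q (g / a) :=
    (maxOneRpow.le_one_add_mul_of_le_add hq0 (by linarith) hC hx hy (by linarith)).trans
      (mul_le_mul_of_nonneg_right (by linarith) (zero_le_one.trans maxOneRpow.one_le))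
  have hlow := maxOneRpow.le_two_mul_of_le_add hq0 hq hC hx hy (by linarith)
  constructor
  · rw [inv_mul_le_iff₀ (by positivity), mul_left_comm]
    exact mul_le_mul_of_nonneg_left hup ha.le
  · rw [mul_left_comm]
    exact mul_le_mul_of_nonneg_left hlow ha.le
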